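/- arXiv:math/0112125 — 7 statements merged into one kernel-verified Lean document; each statement's English description precedes it below -/
import Mathlib

section
/- Let p, q be nonzero complex numbers. The 4×4 matrix R_I = [[1,0,0,0],[0,p,1-pq,0],[0,0,q,0],[0,0,0,1]] (rows and columns indexed by pairs (1,1),(1,2),(2,1),(2,2)) satisfies the quantum Yang–Baxter equation R₁₂ R₁₃ R₂₃ = R₂₃ R₁₃ R₁₂ as 8×8 matrices, where R₁₂ = R_I ⊗ I₂, R₂₃ = I₂ ⊗ R_I, and R₁₃ = (I₂ ⊗ P)(R_I ⊗ I₂)(I₂ ⊗ P) with P the 4×4 flip matrix sending e_i ⊗ e_j to e_j ⊗ e_i. -/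
/-! R_I belongs to the family of matrices `[[a,0,0,0],[0,b,c,0],[0,0,d,0],[0,0,0,e]]`. Entrywise,
the Yang–Baxter equation for such a matrix reduces to `c (a² - a c - b d) = 0` and
`c (e² - e c - b d) = 0`, and for R_I both brackets vanish because `a = e = 1` and
`b d = p q = 1 - c`. -/

open Matrix Kronecker

/-- The type I R-matrix of the two-parameter differential calculus on the quantum
exterior plane, with rows and columns indexed by pairs (1,1),(1,2),(2,1),(2,2). -/
noncomputable def RmatI (p q : ℂ) : Matrix (Fin 2 × Fin 2) (Fin 2 × Fin 2) ℂ :=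
  (!![1, 0, 0, 0;
      0, p, 1 - p * q, 0;
      0, 0, q, 0;
      0, 0, 0, 1]).submatrix finProdFinEquiv finProdFinEquiv

/-- The 4×4 flip matrix sending `e_i ⊗ e_j` to `e_j ⊗ e_i`. -/
def flipP : Matrix (Fin 2 × Fin 2) (Fin 2 × Fin 2) ℂ :=
  Matrix.of fun x y => if x.1 = y.2 ∧ x.2 = y.1 then 1 else 0

/-- `R₁₂ = R ⊗ I₂` as an 8×8 matrix (indices reassociated). -/
noncomputable def R12 (R : Matrix (Fin 2 × Fin 2) (Fin 2 × Fin 2) ℂ) :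
    Matrix (Fin 2 × Fin 2 × Fin 2) (Fin 2 × Fin 2 × Fin 2) ℂ :=
  Matrix.reindex (Equiv.prodAssoc _ _ _) (Equiv.prodAssoc _ _ _)
    (R ⊗ₖ (1 : Matrix (Fin 2) (Fin 2) ℂ))

/-- `R₂₃ = I₂ ⊗ R` as an 8×8 matrix. -/
noncomputable def R23 (R : Matrix (Fin 2 × Fin 2) (Fin 2 × Fin 2) ℂ) :
    Matrix (Fin 2 × Fin 2 × Fin 2) (Fin 2 × Fin 2 × Fin 2) ℂ :=
  (1 : Matrix (Fin 2) (Fin 2) ℂ) ⊗ₖ R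

/-- `R₁₃ = (I₂ ⊗ P)(R ⊗ I₂)(I₂ ⊗ P)` with `P` the flip matrix. -/
noncomputable def R13 (R : Matrix (Fin 2 × Fin 2) (Fin 2 × Fin 2) ℂ) :
    Matrix (Fin 2 × Fin 2 × Fin 2) (Fin 2 × Fin 2 × Fin 2) ℂ :=
  R23 flipP * R12 R * R23 flipP

section
variable (R : Matrix (Fin 2 × Fin 2) (Fin 2 × Fin 2) ℂ) (i j k i' j' k' : Fin 2)

@[simp]
lemma R12_apply :
    R12 R (i, j, k) (i', j', k') = R (i, j) (i', j') * (1 : Matrix (Fin 2) (Fin 2) ℂ) k k' :=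
  rfl

@[simp]
lemma R23_apply :
    R23 R (i, j, k) (i', j', k') = (1 : Matrix (Fin 2) (Fin 2) ℂ) i i' * R (j, k) (j', k') :=
  rfl

lemma flipP_eq_submatrix_one :
    flipP = (1 : Matrix (Fin 2 × Fin 2) (Fin 2 × Fin 2) ℂ).submatrix Prod.swap id := by
  ext ⟨i, j⟩ ⟨i', j'⟩
  simp [flipP, one_apply, Prod.ext_iff, and_comm, eq_comm]

lemma R23_flipP_eq_submatrix_one : R23 flipP =
    (1 : Matrix (Fin 2 × Fin 2 × Fin 2) (Fin 2 × Fin 2 × Fin 2) ℂ).submatrix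
      (Equiv.prodCongr (Equiv.refl _) (Equiv.prodComm _ _)) (Equiv.refl _) := by
  ext ⟨i, j, k⟩ ⟨i', j', k'⟩
  simp only [R23_apply, flipP_eq_submatrix_one, submatrix_apply, one_apply,
    Equiv.prodCongr_apply, Equiv.prodComm_apply, Equiv.refl_apply, Prod.map, Prod.swap, id,
    Prod.mk.injEq, ite_zero_mul_ite_zero, one_mul, and_comm]

lemma R13_apply :
    R13 R (i, j, k) (i', j', k') = R (i, k) (i', k') * (1 : Matrix (Fin 2) (Fin 2) ℂ) j j' := by
  rw [R13, R23_flipP_eq_submatrix_one, one_submatrix_mul, mul_submatrix_one]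
  simp

end

def IsYangBaxter (R : Matrix (Fin 2 × Fin 2) (Fin 2 × Fin 2) ℂ) : Prop :=
  R12 R * R13 R * R23 R = R23 R * R13 R * R12 R

noncomputable def upperTriangularR (a b c d e : ℂ) : Matrix (Fin 2 × Fin 2) (Fin 2 × Fin 2) ℂ :=
  (!![a, 0, 0, 0;
      0, b, c, 0;
      0, 0, d, 0;
      0, 0, 0, e]).submatrix finProdFinEquiv finProdFinEquiv

lemma isYangBaxter_upperTriangularR {a b c d e : ℂ} (ha : a * (a - c) = b * d)
    (he : e * (e - c) = b * d) : IsYangBaxter (upperTriangularR a b c d e) := by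
  unfold IsYangBaxter
  ext ⟨i, j, k⟩ ⟨i', j', k'⟩
  simp only [mul_apply, Fintype.sum_prod_type, Fin.sum_univ_two, R12_apply, R13_apply,
    R23_apply]
  fin_cases i <;> fin_cases j <;> fin_cases k <;> fin_cases i' <;> fin_cases j' <;> fin_cases k' <;>
    simp [upperTriangularR, finProdFinEquiv, one_apply] <;>
    first | ring1 | linear_combination c * ha | linear_combination -c * he

lemma RmatI_eq_upperTriangularR (p q : ℂ) : RmatI p q = upperTriangularR 1 p (1 - p * q) q 1 :=
  rfl

theorem typeI_yang_baxter_general (p q : ℂ) :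
    R12 (RmatI p q) * R13 (RmatI p q) * R23 (RmatI p q) =
      R23 (RmatI p q) * R13 (RmatI p q) * R12 (RmatI p q) := by
  rw [RmatI_eq_upperTriangularR]
  exact isYangBaxter_upperTriangularR (by ring) (by ring)

/-- The type I R-matrix satisfies the quantum Yang–Baxter equation
`R₁₂ R₁₃ R₂₃ = R₂₃ R₁₃ R₁₂`. -/
theorem typeI_yang_baxter (p q : ℂ) (hp : p ≠ 0) (hq : q ≠ 0) :
    R12 (RmatI p q) * R13 (RmatI p q) * R23 (RmatI p q) =
      R23 (RmatI p q) * R13 (RmatI p q) * R12 (RmatI p q) :=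
  typeI_yang_baxter_general p q
end

section
/- Let p, q be nonzero complex numbers. The 4×4 matrix R_II = [[1,0,0,0],[0,q⁻¹,0,0],[0,1-(pq)⁻¹,p⁻¹,0],[0,0,0,1]] (rows and columns indexed by pairs (1,1),(1,2),(2,1),(2,2)) satisfies the quantum Yang–Baxter equation R₁₂ R₁₃ R₂₃ = R₂₃ R₁₃ R₁₂ as 8×8 matrices, where R₁₂ = R_II ⊗ I₂, R₂₃ = I₂ ⊗ R_II, and R₁₃ = (I₂ ⊗ P)(R_II ⊗ I₂)(I₂ ⊗ P) with P the 4×4 flip matrix sending e_i ⊗ e_j to e_j ⊗ e_i. -/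
open Matrix Kronecker

/-- The type II R-matrix of the two-parameter differential calculus on the quantum
exterior plane, with rows and columns indexed by pairs (1,1),(1,2),(2,1),(2,2). -/
noncomputable def RmatII (p q : ℂ) : Matrix (Fin 2 × Fin 2) (Fin 2 × Fin 2) ℂ :=
  (!![1, 0, 0, 0;
      0, q⁻¹, 0, 0;
      0, 1 - (p * q)⁻¹, p⁻¹, 0;
      0, 0, 0, 1]).submatrix finProdFinEquiv finProdFinEquiv

lemma r12_apply (R : Matrix (Fin 2 × Fin 2) (Fin 2 × Fin 2) ℂ) (a b c d e f : Fin 2) :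
    R12 R (a,b,c) (d,e,f) = R (a,b) (d,e) * (if c = f then 1 else 0) := by
  simp [R12, Matrix.one_apply]

lemma r23_apply (R : Matrix (Fin 2 × Fin 2) (Fin 2 × Fin 2) ℂ) (a b c d e f : Fin 2) :
    R23 R (a,b,c) (d,e,f) = (if a = d then 1 else 0) * R (b,c) (e,f) := by
  simp [R23, Matrix.one_apply]

lemma mulP_left (M : Matrix (Fin 2 × Fin 2 × Fin 2) (Fin 2 × Fin 2 × Fin 2) ℂ)
    (a b c : Fin 2) (y : Fin 2 × Fin 2 × Fin 2) :
    (R23 flipP * M) (a,b,c) y = M (a,c,b) y := by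
  rw [Matrix.mul_apply]
  rw [Fintype.sum_prod_type]
  simp [R23, flipP, Matrix.one_apply, Fintype.sum_prod_type, ite_and,
    Finset.sum_ite_eq, Finset.sum_ite_eq']

lemma mulP_right (M : Matrix (Fin 2 × Fin 2 × Fin 2) (Fin 2 × Fin 2 × Fin 2) ℂ)
    (x : Fin 2 × Fin 2 × Fin 2) (d e f : Fin 2) :
    (M * R23 flipP) x (d,e,f) = M x (d,f,e) := by
  rw [Matrix.mul_apply]
  simp [R23, flipP, Matrix.one_apply, Fintype.sum_prod_type, ite_and,
    Finset.sum_ite_eq, Finset.sum_ite_eq']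

lemma r13_apply (R : Matrix (Fin 2 × Fin 2) (Fin 2 × Fin 2) ℂ) (a b c d e f : Fin 2) :
    R13 R (a,b,c) (d,e,f) = R (a,c) (d,f) * (if b = e then 1 else 0) := by
  rw [R13, Matrix.mul_assoc, mulP_left, mulP_right, r12_apply]

lemma RmatII_apply (p q : ℂ) (i j k l : Fin 2) :
    RmatII p q (i, j) (k, l) =
      !![1, 0, 0, 0;
         0, q⁻¹, 0, 0;
         0, 1 - (p * q)⁻¹, p⁻¹, 0;
         0, 0, 0, 1] (finProdFinEquiv (i, j)) (finProdFinEquiv (k, l)) := rfl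

@[simp] lemma Rv0000 (p q : ℂ) : RmatII p q (0,0) (0,0) = 1 := by
  rw [RmatII_apply]; norm_num [finProdFinEquiv, Fin.ext_iff]

@[simp] lemma Rv0001 (p q : ℂ) : RmatII p q (0,0) (0,1) = 0 := by
  rw [RmatII_apply]; norm_num [finProdFinEquiv, Fin.ext_iff]

@[simp] lemma Rv0010 (p q : ℂ) : RmatII p q (0,0) (1,0) = 0 := by
  rw [RmatII_apply]; norm_num [finProdFinEquiv, Fin.ext_iff]

@[simp] lemma Rv0011 (p q : ℂ) : RmatII p q (0,0) (1,1) = 0 := by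
  rw [RmatII_apply]; norm_num [finProdFinEquiv, Fin.ext_iff]

@[simp] lemma Rv0100 (p q : ℂ) : RmatII p q (0,1) (0,0) = 0 := by
  rw [RmatII_apply]; norm_num [finProdFinEquiv, Fin.ext_iff]

@[simp] lemma Rv0101 (p q : ℂ) : RmatII p q (0,1) (0,1) = q⁻¹ := by
  rw [RmatII_apply]; norm_num [finProdFinEquiv, Fin.ext_iff]

@[simp] lemma Rv0110 (p q : ℂ) : RmatII p q (0,1) (1,0) = 0 := by
  rw [RmatII_apply]; norm_num [finProdFinEquiv, Fin.ext_iff]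

@[simp] lemma Rv0111 (p q : ℂ) : RmatII p q (0,1) (1,1) = 0 := by
  rw [RmatII_apply]; norm_num [finProdFinEquiv, Fin.ext_iff]

@[simp] lemma Rv1000 (p q : ℂ) : RmatII p q (1,0) (0,0) = 0 := by
  rw [RmatII_apply]; norm_num [finProdFinEquiv, Fin.ext_iff]

@[simp] lemma Rv1001 (p q : ℂ) : RmatII p q (1,0) (0,1) = 1 - (p * q)⁻¹ := by
  rw [RmatII_apply]; norm_num [finProdFinEquiv, Fin.ext_iff]

@[simp] lemma Rv1010 (p q : ℂ) : RmatII p q (1,0) (1,0) = p⁻¹ := by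
  rw [RmatII_apply]; norm_num [finProdFinEquiv, Fin.ext_iff]

@[simp] lemma Rv1011 (p q : ℂ) : RmatII p q (1,0) (1,1) = 0 := by
  rw [RmatII_apply]; norm_num [finProdFinEquiv, Fin.ext_iff]

@[simp] lemma Rv1100 (p q : ℂ) : RmatII p q (1,1) (0,0) = 0 := by
  rw [RmatII_apply]; norm_num [finProdFinEquiv, Fin.ext_iff]

@[simp] lemma Rv1101 (p q : ℂ) : RmatII p q (1,1) (0,1) = 0 := by
  rw [RmatII_apply]; norm_num [finProdFinEquiv, Fin.ext_iff]

@[simp] lemma Rv1110 (p q : ℂ) : RmatII p q (1,1) (1,0) = 0 := by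
  rw [RmatII_apply]; norm_num [finProdFinEquiv, Fin.ext_iff]

@[simp] lemma Rv1111 (p q : ℂ) : RmatII p q (1,1) (1,1) = 1 := by
  rw [RmatII_apply]; norm_num [finProdFinEquiv, Fin.ext_iff]

set_option maxHeartbeats 1000000 in
/-- The type II R-matrix satisfies the quantum Yang–Baxter equation
`R₁₂ R₁₃ R₂₃ = R₂₃ R₁₃ R₁₂`. -/
theorem typeII_yang_baxter (p q : ℂ) (hp : p ≠ 0) (hq : q ≠ 0) :
    R12 (RmatII p q) * R13 (RmatII p q) * R23 (RmatII p q) =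
      R23 (RmatII p q) * R13 (RmatII p q) * R12 (RmatII p q) := by
  ext ⟨a, b, c⟩ ⟨d, e, f⟩
  rw [Matrix.mul_assoc, Matrix.mul_assoc]
  simp only [Matrix.mul_apply, Fintype.sum_prod_type, r12_apply, r23_apply, r13_apply,
    Fin.sum_univ_two]
  fin_cases a <;> fin_cases b <;> fin_cases c <;> fin_cases d <;> fin_cases e <;> fin_cases f <;>
    · simp only [Fin.mk_zero, Fin.mk_one, Fin.isValue, Rv0000, Rv0001, Rv0010, Rv0011,
        Rv0100, Rv0101, Rv0110, Rv0111,
        Rv1000, Rv1001, Rv1010, Rv1011, Rv1100, Rv1101, Rv1110, Rv1111,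
        Fin.zero_eq_one_iff, Fin.one_eq_zero_iff, if_true, if_false, ite_self,
        mul_zero, zero_mul, mul_one, one_mul, add_zero, zero_add, Ne, OfNat.ofNat_ne_one,
        not_false_eq_true, ite_true, ite_false, reduceIte, Nat.reduceAdd, Nat.reduceEqDiff]
      try field_simp
      try ring
      try exact Or.inl trivial
      try (field_simp; ring)
end

section
/- Let p, q be nonzero complex numbers. The 4×4 matrix R̂_I = [[1,0,0,0],[0,0,q,0],[0,p,1-pq,0],[0,0,0,1]] satisfies the braid relation R̂₁₂ R̂₂₃ R̂₁₂ = R̂₂₃ R̂₁₂ R̂₂₃ as 8×8 matrices, where R̂₁₂ = R̂_I ⊗ I₂ and R̂₂₃ = I₂ ⊗ R̂_I. -/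
open Matrix Kronecker

/-- The type I braid matrix `R̂_I`, obtained from the type I R-matrix by the index flip
`R̂^{ij}_{kl} = R^{ji}_{kl}`; rows and columns are indexed by pairs
(1,1),(1,2),(2,1),(2,2). -/
noncomputable def RhatI (p q : ℂ) : Matrix (Fin 2 × Fin 2) (Fin 2 × Fin 2) ℂ :=
  (!![1, 0, 0, 0;
      0, 0, q, 0;
      0, p, 1 - p * q, 0;
      0, 0, 0, 1]).submatrix finProdFinEquiv finProdFinEquiv

/-- `R̂₁₂ = R̂ ⊗ I₂` as an 8×8 matrix (indices reassociated). -/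
noncomputable def Rhat12 (R : Matrix (Fin 2 × Fin 2) (Fin 2 × Fin 2) ℂ) :
    Matrix (Fin 2 × Fin 2 × Fin 2) (Fin 2 × Fin 2 × Fin 2) ℂ :=
  Matrix.reindex (Equiv.prodAssoc _ _ _) (Equiv.prodAssoc _ _ _)
    (R ⊗ₖ (1 : Matrix (Fin 2) (Fin 2) ℂ))

/-- `R̂₂₃ = I₂ ⊗ R̂` as an 8×8 matrix. -/
noncomputable def Rhat23 (R : Matrix (Fin 2 × Fin 2) (Fin 2 × Fin 2) ℂ) :
    Matrix (Fin 2 × Fin 2 × Fin 2) (Fin 2 × Fin 2 × Fin 2) ℂ :=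
  (1 : Matrix (Fin 2) (Fin 2) ℂ) ⊗ₖ R

theorem Rhat12_apply (M : Matrix (Fin 2 × Fin 2) (Fin 2 × Fin 2) ℂ) (i j k a b c : Fin 2) :
    Rhat12 M (i, j, k) (a, b, c) = M (i, j) (a, b) * (1 : Matrix (Fin 2) (Fin 2) ℂ) k c :=
  rfl

theorem Rhat23_apply (M : Matrix (Fin 2 × Fin 2) (Fin 2 × Fin 2) ℂ) (i j k a b c : Fin 2) :
    Rhat23 M (i, j, k) (a, b, c) = (1 : Matrix (Fin 2) (Fin 2) ℂ) i a * M (j, k) (b, c) :=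
  rfl

/-- The entries `R̂^{ij}_{kl}` as a four-index array, which `simp` evaluates directly instead of
going through `finProdFinEquiv`. -/
theorem RhatI_apply (p q : ℂ) (i j k l : Fin 2) :
    RhatI p q (i, j) (k, l) =
      ![![![![1, 0], ![0, 0]], ![![0, 0], ![q, 0]]],
        ![![![0, p], ![1 - p * q, 0]], ![![0, 0], ![0, 1]]]] i j k l := by
  fin_cases i <;> fin_cases j <;> fin_cases k <;> fin_cases l <;> rfl

theorem typeI_braid_general (p q : ℂ) :
    Rhat12 (RhatI p q) * Rhat23 (RhatI p q) * Rhat12 (RhatI p q) =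
      Rhat23 (RhatI p q) * Rhat12 (RhatI p q) * Rhat23 (RhatI p q) := by
  ext ⟨i, j, k⟩ ⟨a, b, c⟩
  simp only [mul_apply, Fintype.sum_prod_type, Fin.sum_univ_two, Rhat12_apply, Rhat23_apply,
    RhatI_apply, one_apply]
  fin_cases i <;> fin_cases j <;> fin_cases k <;> fin_cases a <;> fin_cases b <;> fin_cases c <;>
    simp <;> ring

/-- The type I braid matrix satisfies the braid relation
`R̂₁₂ R̂₂₃ R̂₁₂ = R̂₂₃ R̂₁₂ R̂₂₃`. -/
theorem typeI_braid (p q : ℂ) (hp : p ≠ 0) (hq : q ≠ 0) :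
    Rhat12 (RhatI p q) * Rhat23 (RhatI p q) * Rhat12 (RhatI p q) =
      Rhat23 (RhatI p q) * Rhat12 (RhatI p q) * Rhat23 (RhatI p q) :=
  typeI_braid_general p q
end

section
/- Let p, q be nonzero complex numbers. A quadruple (F₁₁, F₁₂, F₂₁, F₂₂) of complex numbers satisfies the system F₂₂ + p·F₁₁ = 1, F₂₁ + p·F₁₂ = p, F₁₂·F₂₂ = 0, F₁₁·F₂₁ = 1 - F₁₂ - F₂₂, F₁₁ = q·(1 - F₁₂), and F₂₁ = q⁻¹·(1 - F₂₂) if and only if either (F₁₁, F₁₂, F₂₁, F₂₂) = (q, 0, p, 1 - pq) (type I) or (F₁₁, F₁₂, F₂₁, F₂₂) = (p⁻¹, 1 - (pq)⁻¹, q⁻¹, 0) (type II). -/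
/-!
The relation `F₁₂ F₂₂ = 0` splits the system into two cases. If `F₁₂ = 0`, the equations
`F₁₁ = q (1 - F₁₂)`, `F₂₁ + p F₁₂ = p` and `F₂₂ + p F₁₁ = 1` are linear and give type I.
If `F₂₂ = 0`, then `p F₁₁ = 1` and `F₂₁ = q⁻¹`, and `F₁₁ = q (1 - F₁₂)` becomes
`p q F₁₂ = p q - 1`, which gives type II.
-/

section StructureConstants

variable {K : Type*} [Field K] {p q F11 F12 F21 F22 : K}

def StructureEquations (p q F11 F12 F21 F22 : K) : Prop :=
  F22 + p * F11 = 1 ∧ F21 + p * F12 = p ∧ F12 * F22 = 0 ∧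
    F11 * F21 = 1 - F12 - F22 ∧ F11 = q * (1 - F12) ∧ F21 = q⁻¹ * (1 - F22)

theorem typeI_of_F12_eq_zero (h1 : F22 + p * F11 = 1) (h2 : F21 + p * F12 = p)
    (h5 : F11 = q * (1 - F12)) (h0 : F12 = 0) :
    F11 = q ∧ F12 = 0 ∧ F21 = p ∧ F22 = 1 - p * q := by
  have hF11 : F11 = q := by linear_combination h5 - q * h0
  exact ⟨hF11, h0, by linear_combination h2 - p * h0, by linear_combination h1 - p * hF11⟩

theorem typeII_of_F22_eq_zero (hp : p ≠ 0) (hq : q ≠ 0) (h1 : F22 + p * F11 = 1)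
    (h5 : F11 = q * (1 - F12)) (h6 : F21 = q⁻¹ * (1 - F22)) (h0 : F22 = 0) :
    F11 = p⁻¹ ∧ F12 = 1 - (p * q)⁻¹ ∧ F21 = q⁻¹ ∧ F22 = 0 := by
  have hpF11 : p * F11 = 1 := by linear_combination h1 - h0
  have hpqF12 : p * q * F12 = p * q - 1 := by linear_combination p * h5 - hpF11
  refine ⟨eq_inv_of_mul_eq_one_right hpF11, ?_, by linear_combination h6 - q⁻¹ * h0, h0⟩
  field_simp
  linear_combination hpqF12

theorem StructureEquations.typeI_or_typeII (hp : p ≠ 0) (hq : q ≠ 0)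
    (h : StructureEquations p q F11 F12 F21 F22) :
    (F11 = q ∧ F12 = 0 ∧ F21 = p ∧ F22 = 1 - p * q) ∨
      (F11 = p⁻¹ ∧ F12 = 1 - (p * q)⁻¹ ∧ F21 = q⁻¹ ∧ F22 = 0) := by
  obtain ⟨h1, h2, h3, -, h5, h6⟩ := h
  rcases mul_eq_zero.mp h3 with hF12 | hF22
  · exact Or.inl (typeI_of_F12_eq_zero h1 h2 h5 hF12)
  · exact Or.inr (typeII_of_F22_eq_zero hp hq h1 h5 h6 hF22)

theorem structureEquations_typeI (hq : q ≠ 0) : StructureEquations p q q 0 p (1 - p * q) := by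
  refine ⟨by ring, by ring, by ring, by ring, by ring, ?_⟩
  field_simp
  ring

theorem structureEquations_typeII (hp : p ≠ 0) (hq : q ≠ 0) :
    StructureEquations p q p⁻¹ (1 - (p * q)⁻¹) q⁻¹ 0 := by
  refine ⟨?_, ?_, by ring, ?_, ?_, by ring⟩ <;> field_simp <;> ring

end StructureConstants

/-- The consistency conditions of the two-parameter differential calculus on the
quantum exterior plane admit exactly two solutions: type I
`(F₁₁, F₁₂, F₂₁, F₂₂) = (q, 0, p, 1 - pq)` and type II
`(F₁₁, F₁₂, F₂₁, F₂₂) = (p⁻¹, 1 - (pq)⁻¹, q⁻¹, 0)`. -/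
theorem structure_constants_two_solutions (p q : ℂ) (hp : p ≠ 0) (hq : q ≠ 0)
    (F11 F12 F21 F22 : ℂ) :
    (F22 + p * F11 = 1 ∧ F21 + p * F12 = p ∧ F12 * F22 = 0 ∧
        F11 * F21 = 1 - F12 - F22 ∧ F11 = q * (1 - F12) ∧ F21 = q⁻¹ * (1 - F22)) ↔
      ((F11 = q ∧ F12 = 0 ∧ F21 = p ∧ F22 = 1 - p * q) ∨
        (F11 = p⁻¹ ∧ F12 = 1 - (p * q)⁻¹ ∧ F21 = q⁻¹ ∧ F22 = 0)) := by
  refine ⟨StructureEquations.typeI_or_typeII hp hq, ?_⟩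
  rintro (⟨rfl, rfl, rfl, rfl⟩ | ⟨rfl, rfl, rfl, rfl⟩)
  · exact structureEquations_typeI hq
  · exact structureEquations_typeII hp hq
end

section
/- Let p, q be nonzero complex numbers, let A be a (not necessarily commutative) ℂ-algebra, and let θ, φ, a, b, c, d ∈ A be such that: θ² = 0, φ² = 0, θφ + p⁻¹φθ = 0; each of a, b, c, d commutes with θ and with φ; and a, b, c, d satisfy the GL_{p,q}(2) relations ab = p·ba, cd = p·dc, ac = q·ca, bd = q·db, p·bc = q·cb, and ad - da = (p - q⁻¹)·bc. Then the transformed coordinates θ' = aθ + bφ and φ' = cθ + dφ satisfy the same quantum exterior plane relations: θ'² = 0, φ'² = 0, and θ'φ' + p⁻¹φ'θ' = 0. -/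
/-!
Because the matrix entries commute with `θ` and `φ` and `θ² = φ² = 0`, every product
`(αθ + βφ)(γθ + δφ)` collapses to `αδ θφ + βγ φθ = (αδ - p βγ) θφ`, using `φθ = -p θφ`.
The three exterior plane relations for `θ', φ'` thus reduce to the vanishing of the coefficients
`ab - p ba`, `cd - p dc` and `ad - da - p bc + p⁻¹ cb`, which the `GL_{p,q}(2)` relations provide.
-/

theorem add_mul_add_of_sq_eq_zero {A : Type*} [Ring A] {x y α β γ δ : A}
    (hx : x ^ 2 = 0) (hy : y ^ 2 = 0) (hγx : Commute γ x) (hγy : Commute γ y)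
    (hδx : Commute δ x) (hδy : Commute δ y) :
    (α * x + β * y) * (γ * x + δ * y) = α * δ * (x * y) + β * γ * (y * x) := by
  rw [sq] at hx hy
  simp only [add_mul, mul_add, mul_assoc, hγx.symm.left_comm, hγy.symm.left_comm,
    hδx.symm.left_comm, hδy.symm.left_comm, hx, hy, mul_zero, add_zero, add_comm]

section

variable {K A : Type*} [Field K] [Ring A] [Algebra K A]

def IsQuantumExteriorPlane (p : K) (θ φ : A) : Prop :=
  θ ^ 2 = 0 ∧ φ ^ 2 = 0 ∧ θ * φ + p⁻¹ • (φ * θ) = 0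

namespace IsQuantumExteriorPlane

variable {p : K} {θ φ : A}

theorem mul_swap (h : IsQuantumExteriorPlane p θ φ) (hp : p ≠ 0) :
    φ * θ = (-p) • (θ * φ) := by
  have := congrArg (p • ·) h.2.2
  simp only [smul_add, smul_inv_smul₀ hp, smul_zero] at this
  rw [neg_smul, eq_neg_of_add_eq_zero_right this]

theorem add_mul_add (h : IsQuantumExteriorPlane p θ φ) (hp : p ≠ 0) {α β γ δ : A}
    (hγθ : Commute γ θ) (hγφ : Commute γ φ) (hδθ : Commute δ θ) (hδφ : Commute δ φ) :
    (α * θ + β * φ) * (γ * θ + δ * φ) = (α * δ - p • (β * γ)) * (θ * φ) := by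
  rw [add_mul_add_of_sq_eq_zero h.1 h.2.1 hγθ hγφ hδθ hδφ, h.mul_swap hp, mul_smul_comm,
    sub_mul, smul_mul_assoc, neg_smul, sub_eq_add_neg]

theorem linear_transform {q : K} (h : IsQuantumExteriorPlane p θ φ) (hp : p ≠ 0)
    (hq : q ≠ 0) {a b c d : A}
    (hcomm : ∀ t ∈ ({a, b, c, d} : Set A), ∀ x ∈ ({θ, φ} : Set A), Commute t x)
    (hab : a * b = p • (b * a)) (hcd : c * d = p • (d * c))
    (hbc : p • (b * c) = q • (c * b)) (had : a * d - d * a = (p - q⁻¹) • (b * c)) :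
    IsQuantumExteriorPlane p (a * θ + b * φ) (c * θ + d * φ) := by
  have mul_eq {γ δ : A} (hγ : γ ∈ ({a, b, c, d} : Set A)) (hδ : δ ∈ ({a, b, c, d} : Set A))
      (α β : A) : (α * θ + β * φ) * (γ * θ + δ * φ) = (α * δ - p • (β * γ)) * (θ * φ) :=
    h.add_mul_add hp (hcomm γ hγ θ (by simp)) (hcomm γ hγ φ (by simp))
      (hcomm δ hδ θ (by simp)) (hcomm δ hδ φ (by simp))
  have hcb : p⁻¹ • (c * b) = q⁻¹ • (b * c) := by
    rw [inv_smul_eq_iff₀ hp, smul_comm, hbc, inv_smul_smul₀ hq]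
  refine ⟨?_, ?_, ?_⟩
  · rw [sq, mul_eq (by simp) (by simp), hab, sub_self, zero_mul]
  · rw [sq, mul_eq (by simp) (by simp), hcd, sub_self, zero_mul]
  · rw [mul_eq (by simp) (by simp), mul_eq (by simp) (by simp), ← smul_mul_assoc p⁻¹, ← add_mul,
      smul_sub, hcb, smul_smul, inv_mul_cancel₀ hp, one_smul]
    convert zero_mul (θ * φ)
    linear_combination (norm := module) had

end IsQuantumExteriorPlane

end

theorem exterior_plane_covariance_general (p q : ℂ) (hp : p ≠ 0) (hq : q ≠ 0)
    {A : Type*} [Ring A] [Algebra ℂ A] (θ φ a b c d : A)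
    (hθ2 : θ ^ 2 = 0) (hφ2 : φ ^ 2 = 0) (hθφ : θ * φ + p⁻¹ • (φ * θ) = 0)
    (hcomm : ∀ t ∈ ({a, b, c, d} : Set A), ∀ x ∈ ({θ, φ} : Set A), t * x = x * t)
    (hab : a * b = p • (b * a)) (hcd : c * d = p • (d * c))
    (hbc : p • (b * c) = q • (c * b))
    (had : a * d - d * a = (p - q⁻¹) • (b * c)) :
    (a * θ + b * φ) ^ 2 = 0 ∧ (c * θ + d * φ) ^ 2 = 0 ∧
      (a * θ + b * φ) * (c * θ + d * φ) +
        p⁻¹ • ((c * θ + d * φ) * (a * θ + b * φ)) = 0 :=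
  IsQuantumExteriorPlane.linear_transform ⟨hθ2, hφ2, hθφ⟩ hp hq hcomm hab hcd hbc had

/-- The quantum exterior plane relations `θ² = 0`, `φ² = 0`, `θφ + p⁻¹φθ = 0` are
preserved under the transformation `θ' = aθ + bφ`, `φ' = cθ + dφ` by a quantum matrix
with entries satisfying the `GL_{p,q}(2)` relations and commuting with the coordinates. -/
theorem exterior_plane_covariance (p q : ℂ) (hp : p ≠ 0) (hq : q ≠ 0)
    {A : Type*} [Ring A] [Algebra ℂ A] (θ φ a b c d : A)
    (hθ2 : θ ^ 2 = 0) (hφ2 : φ ^ 2 = 0) (hθφ : θ * φ + p⁻¹ • (φ * θ) = 0)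
    (hcomm : ∀ t ∈ ({a, b, c, d} : Set A), ∀ x ∈ ({θ, φ} : Set A), t * x = x * t)
    (hab : a * b = p • (b * a)) (hcd : c * d = p • (d * c))
    (hac : a * c = q • (c * a)) (hbd : b * d = q • (d * b))
    (hbc : p • (b * c) = q • (c * b))
    (had : a * d - d * a = (p - q⁻¹) • (b * c)) :
    (a * θ + b * φ) ^ 2 = 0 ∧ (c * θ + d * φ) ^ 2 = 0 ∧
      (a * θ + b * φ) * (c * θ + d * φ) +
        p⁻¹ • ((c * θ + d * φ) * (a * θ + b * φ)) = 0 :=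
  exterior_plane_covariance_general p q hp hq θ φ a b c d hθ2 hφ2 hθφ hcomm hab hcd hbc had
end

section
/- Let p, q be nonzero complex numbers, let A be a (not necessarily commutative) ℂ-algebra, and let Θ, Φ, a, b, c, d ∈ A be such that: ΘΦ = q·ΦΘ; each of a, b, c, d commutes with Θ and with Φ; and a, b, c, d satisfy the GL_{p,q}(2) relations ab = p·ba, cd = p·dc, ac = q·ca, bd = q·db, p·bc = q·cb, and ad - da = (p - q⁻¹)·bc. Then the transformed differentials Θ' = aΘ + bΦ and Φ' = cΘ + dΦ satisfy Θ'Φ' = q·Φ'Θ'. -/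
/-!
Moving the matrix entries past the differentials, both products `Θ'Φ'` and `Φ'Θ'` become
combinations of `ΘΘ`, `ΦΘ`, `ΦΦ` with coefficients in the entries, once `ΘΦ` is rewritten as
`qΦΘ`. The `ΘΘ` and `ΦΦ` coefficients match by `ac = qca` and `bd = qdb`; the `ΦΘ` coefficients
`q ad + bc` and `q(q cb + da)` match by the determinant relation together with `pbc = qcb`.
-/

section QuantumPlane

variable {R A : Type*} [CommSemiring R] [Semiring A] [Algebra R A]

theorem quantumPlane_linear_mul_linear {q : R} {Θ Φ : A} (hΘΦ : Θ * Φ = q • (Φ * Θ))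
    (a b : A) {c d : A} (hcΘ : Commute c Θ) (hcΦ : Commute c Φ) (hdΘ : Commute d Θ)
    (hdΦ : Commute d Φ) :
    (a * Θ + b * Φ) * (c * Θ + d * Φ) =
      (a * c) * (Θ * Θ) + (q • (a * d) + b * c) * (Φ * Θ) + (b * d) * (Φ * Φ) := by
  simp only [add_mul, mul_add, hcΘ.symm.mul_mul_mul_comm, hcΦ.symm.mul_mul_mul_comm,
    hdΘ.symm.mul_mul_mul_comm, hdΦ.symm.mul_mul_mul_comm, hΘΦ, mul_smul_comm, smul_mul_assoc]
  abel

end QuantumPlane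

theorem smul_mul_add_mul_eq_of_pq_relations {K A : Type*} [Field K] [Ring A] [Algebra K A]
    {p q : K} (hq : q ≠ 0) {a b c d : A} (hbc : p • (b * c) = q • (c * b))
    (had : a * d - d * a = (p - q⁻¹) • (b * c)) :
    q • (a * d) + b * c = q • (q • (c * b) + d * a) := by
  have had' : q • (a * d) = q • (d * a) + (q * p - 1) • (b * c) := by
    rw [← sub_eq_iff_eq_add', ← smul_sub, had, smul_smul, mul_sub, mul_inv_cancel₀ hq]
  rw [had', sub_smul, one_smul, mul_smul, hbc, smul_add]
  abel

theorem differentials_covariance_general (p q : ℂ) (hq : q ≠ 0)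
    {A : Type*} [Ring A] [Algebra ℂ A] (Θ Φ a b c d : A)
    (hΘΦ : Θ * Φ = q • (Φ * Θ))
    (hcomm : ∀ t ∈ ({a, b, c, d} : Set A), ∀ x ∈ ({Θ, Φ} : Set A), t * x = x * t)
    (hac : a * c = q • (c * a)) (hbd : b * d = q • (d * b))
    (hbc : p • (b * c) = q • (c * b))
    (had : a * d - d * a = (p - q⁻¹) • (b * c)) :
    (a * Θ + b * Φ) * (c * Θ + d * Φ) = q • ((c * Θ + d * Φ) * (a * Θ + b * Φ)) := by
  have comm : ∀ t ∈ ({a, b, c, d} : Set A), Commute t Θ ∧ Commute t Φ := fun t ht =>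
    ⟨hcomm t ht Θ (by simp), hcomm t ht Φ (by simp)⟩
  obtain ⟨haΘ, haΦ⟩ := comm a (by simp)
  obtain ⟨hbΘ, hbΦ⟩ := comm b (by simp)
  obtain ⟨hcΘ, hcΦ⟩ := comm c (by simp)
  obtain ⟨hdΘ, hdΦ⟩ := comm d (by simp)
  rw [quantumPlane_linear_mul_linear hΘΦ a b hcΘ hcΦ hdΘ hdΦ,
    quantumPlane_linear_mul_linear hΘΦ c d haΘ haΦ hbΘ hbΦ,
    smul_mul_add_mul_eq_of_pq_relations hq hbc had, hac, hbd]
  simp only [smul_add, smul_mul_assoc, add_mul]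

/-- The quantum plane relation `ΘΦ = qΦΘ` between the differentials is preserved under
the transformation `Θ' = aΘ + bΦ`, `Φ' = cΘ + dΦ` by a quantum matrix with entries
satisfying the `GL_{p,q}(2)` relations and commuting with the differentials. -/
theorem differentials_covariance (p q : ℂ) (hp : p ≠ 0) (hq : q ≠ 0)
    {A : Type*} [Ring A] [Algebra ℂ A] (Θ Φ a b c d : A)
    (hΘΦ : Θ * Φ = q • (Φ * Θ))
    (hcomm : ∀ t ∈ ({a, b, c, d} : Set A), ∀ x ∈ ({Θ, Φ} : Set A), t * x = x * t)
    (hab : a * b = p • (b * a)) (hcd : c * d = p • (d * c))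
    (hac : a * c = q • (c * a)) (hbd : b * d = q • (d * b))
    (hbc : p • (b * c) = q • (c * b))
    (had : a * d - d * a = (p - q⁻¹) • (b * c)) :
    (a * Θ + b * Φ) * (c * Θ + d * Φ) = q • ((c * Θ + d * Φ) * (a * Θ + b * Φ)) :=
  differentials_covariance_general p q hq Θ Φ a b c d hΘΦ hcomm hac hbd hbc had
end

section
/- Let p, q be nonzero complex numbers, let A be a (not necessarily commutative) ℂ-algebra, and let θ, φ, Θ, Φ, a, b, c, d ∈ A be such that: the type I relations hold, namely θΘ = Θθ, θΦ = q·Φθ, φΦ = Φφ, φΘ = p·Θφ + (1 - pq)·Φθ; each of a, b, c, d commutes with each of θ, φ, Θ, Φ; and a, b, c, d satisfy the GL_{p,q}(2) relations ab = p·ba, cd = p·dc, ac = q·ca, bd = q·db, p·bc = q·cb, and ad - da = (p - q⁻¹)·bc. Then the transformed elements θ' = aθ + bφ, φ' = cθ + dφ, Θ' = aΘ + bΦ, Φ' = cΘ + dΦ satisfy the same type I relations: θ'Θ' = Θ'θ', θ'Φ' = q·Φ'θ', φ'Φ' = Φ'φ', and φ'Θ' = p·Θ'φ' + (1 - pq)·Φ'θ'.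 -/
/-!
Since the matrix entries commute with the coordinates and differentials, every product of a
transformed coordinate with a transformed differential expands as a sum of terms
(entry · entry) · (coordinate · differential). The type I relations rewrite each such sum in the
ordered monomials `Θθ, Φθ, Θφ, Φφ`, with coefficients in the algebra generated by the entries,
and each transformed relation then reduces to four identities between these coefficients,
which are consequences of the `GL_{p,q}(2)` relations.
-/

section

variable {A : Type*} [Ring A]

theorem add_mul_add_of_commute {s₁ s₂ t₁ t₂ x y X Y : A}
    (h₁₁ : Commute t₁ x) (h₁₂ : Commute t₁ y) (h₂₁ : Commute t₂ x) (h₂₂ : Commute t₂ y) :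
    (s₁ * x + s₂ * y) * (t₁ * X + t₂ * Y) =
      s₁ * t₁ * (x * X) + s₁ * t₂ * (x * Y) + s₂ * t₁ * (y * X) + s₂ * t₂ * (y * Y) := by
  simp only [add_mul, mul_add, h₁₁.symm.mul_mul_mul_comm, h₁₂.symm.mul_mul_mul_comm,
    h₂₁.symm.mul_mul_mul_comm, h₂₂.symm.mul_mul_mul_comm]
  abel

def normalOrdered (θ φ Θ Φ α β γ δ : A) : A :=
  α * (Θ * θ) + β * (Φ * θ) + γ * (Θ * φ) + δ * (Φ * φ)

theorem differential_mul_coordinate_eq_normalOrdered {θ φ Θ Φ s₁ s₂ t₁ t₂ : A}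
    (h₁Θ : Commute s₁ Θ) (h₁Φ : Commute s₁ Φ) (h₂Θ : Commute s₂ Θ) (h₂Φ : Commute s₂ Φ) :
    (t₁ * Θ + t₂ * Φ) * (s₁ * θ + s₂ * φ) =
      normalOrdered θ φ Θ Φ (t₁ * s₁) (t₂ * s₁) (t₁ * s₂) (t₂ * s₂) := by
  rw [add_mul_add_of_commute h₁Θ h₁Φ h₂Θ h₂Φ, normalOrdered]
  abel

variable {K : Type*} [Field K] [Algebra K A]

structure IsTypeI (p q : K) (θ φ Θ Φ : A) : Prop where
  theta_Theta : θ * Θ = Θ * θ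
  theta_Phi : θ * Φ = q • (Φ * θ)
  phi_Phi : φ * Φ = Φ * φ
  phi_Theta : φ * Θ = p • (Θ * φ) + (1 - p * q) • (Φ * θ)

structure IsGLpq (p q : K) (a b c d : A) : Prop where
  ab : a * b = p • (b * a)
  cd : c * d = p • (d * c)
  ac : a * c = q • (c * a)
  bd : b * d = q • (d * b)
  bc : p • (b * c) = q • (c * b)
  ad : a * d - d * a = (p - q⁻¹) • (b * c)

namespace IsGLpq

variable {p q : K} {a b c d : A}

theorem cb_eq (h : IsGLpq p q a b c d) (hq : q ≠ 0) : c * b = (q⁻¹ * p) • (b * c) := by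
  rw [mul_smul, h.bc, smul_smul, inv_mul_cancel₀ hq, one_smul]

theorem ad_eq (h : IsGLpq p q a b c d) : a * d = d * a + (p - q⁻¹) • (b * c) := by
  rw [← h.ad, add_sub_cancel]

theorem smul_ad_add_bc (h : IsGLpq p q a b c d) (hq : q ≠ 0) :
    q • (a * d) + (1 - p * q) • (b * c) = q • (d * a) := by
  rw [h.ad_eq, smul_add, smul_smul, mul_sub, mul_inv_cancel₀ hq]
  module

theorem smul_ad_add_cb (h : IsGLpq p q a b c d) (hq : q ≠ 0) :
    p • (a * d) + (1 - p * q) • (c * b) = p • (d * a) := by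
  rw [h.ad_eq, h.cb_eq hq]
  match_scalars
  · ring
  · field_simp
    ring

end IsGLpq

section normalOrdered

variable (θ φ Θ Φ : A)

theorem smul_normalOrdered (r : K) (α β γ δ : A) :
    r • normalOrdered θ φ Θ Φ α β γ δ = normalOrdered θ φ Θ Φ (r • α) (r • β) (r • γ) (r • δ) := by
  simp only [normalOrdered, smul_add, smul_mul_assoc]

theorem normalOrdered_add_normalOrdered (α β γ δ α' β' γ' δ' : A) :
    normalOrdered θ φ Θ Φ α β γ δ + normalOrdered θ φ Θ Φ α' β' γ' δ' =
      normalOrdered θ φ Θ Φ (α + α') (β + β') (γ + γ') (δ + δ') := by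
  simp only [normalOrdered, add_mul]
  abel

end normalOrdered

theorem IsTypeI.coordinate_mul_differential_eq_normalOrdered {p q : K} {θ φ Θ Φ s₁ s₂ t₁ t₂ : A}
    (h : IsTypeI p q θ φ Θ Φ)
    (h₁θ : Commute t₁ θ) (h₁φ : Commute t₁ φ) (h₂θ : Commute t₂ θ) (h₂φ : Commute t₂ φ) :
    (s₁ * θ + s₂ * φ) * (t₁ * Θ + t₂ * Φ) =
      normalOrdered θ φ Θ Φ (s₁ * t₁) (q • (s₁ * t₂) + (1 - p * q) • (s₂ * t₁))
        (p • (s₂ * t₁)) (s₂ * t₂) := by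
  rw [add_mul_add_of_commute h₁θ h₁φ h₂θ h₂φ, h.theta_Theta, h.theta_Phi, h.phi_Phi,
    h.phi_Theta, normalOrdered]
  simp only [mul_add, mul_smul_comm, smul_mul_assoc, add_mul]
  abel

theorem IsTypeI.transform {p q : K} (hq : q ≠ 0) {θ φ Θ Φ a b c d : A}
    (hT : IsTypeI p q θ φ Θ Φ) (hG : IsGLpq p q a b c d)
    (hcomm : ∀ t ∈ ({a, b, c, d} : Set A), ∀ x ∈ ({θ, φ, Θ, Φ} : Set A), Commute t x) :
    IsTypeI p q (a * θ + b * φ) (c * θ + d * φ) (a * Θ + b * Φ) (c * Θ + d * Φ) := by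
  simp only [Set.mem_insert_iff, Set.mem_singleton_iff, forall_eq_or_imp, forall_eq] at hcomm
  obtain ⟨⟨haθ, haφ, haΘ, haΦ⟩, ⟨hbθ, hbφ, hbΘ, hbΦ⟩, ⟨hcθ, hcφ, hcΘ, hcΦ⟩,
    ⟨hdθ, hdφ, hdΘ, hdΦ⟩⟩ := hcomm
  constructor
  · rw [hT.coordinate_mul_differential_eq_normalOrdered haθ haφ hbθ hbφ,
      differential_mul_coordinate_eq_normalOrdered haΘ haΦ hbΘ hbΦ, hG.ab]
    congr 1
    module
  · rw [hT.coordinate_mul_differential_eq_normalOrdered hcθ hcφ hdθ hdφ,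
      differential_mul_coordinate_eq_normalOrdered haΘ haΦ hbΘ hbΦ, smul_normalOrdered,
      hG.ac, hG.smul_ad_add_bc hq, hG.bc, hG.bd]
  · rw [hT.coordinate_mul_differential_eq_normalOrdered hcθ hcφ hdθ hdφ,
      differential_mul_coordinate_eq_normalOrdered hcΘ hcΦ hdΘ hdΦ, hG.cd]
    congr 1
    module
  · rw [hT.coordinate_mul_differential_eq_normalOrdered haθ haφ hbθ hbφ,
      differential_mul_coordinate_eq_normalOrdered hcΘ hcΦ hdΘ hdΦ,
      differential_mul_coordinate_eq_normalOrdered haΘ haΦ hbΘ hbΦ, smul_normalOrdered,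
      smul_normalOrdered, normalOrdered_add_normalOrdered, hG.bc, ← hG.smul_ad_add_cb hq,
      hG.ac, hG.bd]
    congr 1 <;> module

end

theorem typeI_relations_covariance_general (p q : ℂ) (hq : q ≠ 0)
    {A : Type*} [Ring A] [Algebra ℂ A] (θ φ Θ Φ a b c d : A)
    (h1 : θ * Θ = Θ * θ) (h2 : θ * Φ = q • (Φ * θ)) (h3 : φ * Φ = Φ * φ)
    (h4 : φ * Θ = p • (Θ * φ) + (1 - p * q) • (Φ * θ))
    (hcomm : ∀ t ∈ ({a, b, c, d} : Set A), ∀ x ∈ ({θ, φ, Θ, Φ} : Set A), t * x = x * t)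
    (hab : a * b = p • (b * a)) (hcd : c * d = p • (d * c))
    (hac : a * c = q • (c * a)) (hbd : b * d = q • (d * b))
    (hbc : p • (b * c) = q • (c * b))
    (had : a * d - d * a = (p - q⁻¹) • (b * c)) :
    (a * θ + b * φ) * (a * Θ + b * Φ) = (a * Θ + b * Φ) * (a * θ + b * φ) ∧
      (a * θ + b * φ) * (c * Θ + d * Φ) = q • ((c * Θ + d * Φ) * (a * θ + b * φ)) ∧
      (c * θ + d * φ) * (c * Θ + d * Φ) = (c * Θ + d * Φ) * (c * θ + d * φ) ∧
      (c * θ + d * φ) * (a * Θ + b * Φ) =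
        p • ((a * Θ + b * Φ) * (c * θ + d * φ)) +
          (1 - p * q) • ((c * Θ + d * Φ) * (a * θ + b * φ)) := by
  obtain ⟨h1', h2', h3', h4'⟩ :=
    IsTypeI.transform hq ⟨h1, h2, h3, h4⟩ ⟨hab, hcd, hac, hbd, hbc, had⟩ hcomm
  exact ⟨h1', h2', h3', h4'⟩

/-- The type I relations between the coordinates and the differentials of the quantum
exterior plane are preserved under the action of a quantum matrix with entries
satisfying the `GL_{p,q}(2)` relations and commuting with coordinates and
differentials. -/
theorem typeI_relations_covariance (p q : ℂ) (hp : p ≠ 0) (hq : q ≠ 0)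
    {A : Type*} [Ring A] [Algebra ℂ A] (θ φ Θ Φ a b c d : A)
    (h1 : θ * Θ = Θ * θ) (h2 : θ * Φ = q • (Φ * θ)) (h3 : φ * Φ = Φ * φ)
    (h4 : φ * Θ = p • (Θ * φ) + (1 - p * q) • (Φ * θ))
    (hcomm : ∀ t ∈ ({a, b, c, d} : Set A), ∀ x ∈ ({θ, φ, Θ, Φ} : Set A), t * x = x * t)
    (hab : a * b = p • (b * a)) (hcd : c * d = p • (d * c))
    (hac : a * c = q • (c * a)) (hbd : b * d = q • (d * b))
    (hbc : p • (b * c) = q • (c * b))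
    (had : a * d - d * a = (p - q⁻¹) • (b * c)) :
    (a * θ + b * φ) * (a * Θ + b * Φ) = (a * Θ + b * Φ) * (a * θ + b * φ) ∧
      (a * θ + b * φ) * (c * Θ + d * Φ) = q • ((c * Θ + d * Φ) * (a * θ + b * φ)) ∧
      (c * θ + d * φ) * (c * Θ + d * Φ) = (c * Θ + d * Φ) * (c * θ + d * φ) ∧
      (c * θ + d * φ) * (a * Θ + b * Φ) =
        p • ((a * Θ + b * Φ) * (c * θ + d * φ)) +
          (1 - p * q) • ((c * Θ + d * Φ) * (a * θ + b * φ)) :=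
  typeI_relations_covariance_general p q hq θ φ Θ Φ a b c d h1 h2 h3 h4 hcomm hab hcd hac hbd hbc
    had
end
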